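/- arXiv:math-ph/0611004 — 2 statements merged into one kernel-verified Lean document; each statement's English description precedes it below -/
import Mathlib

section
/- Let Λ be a nonempty finite set, Φ(x) = |x|²/2 + Ψ(x) with Ψ : ℝ^Λ → ℝ smooth and all partial derivatives of ∇Ψ bounded, and g : ℝ^Λ → ℝ smooth with all partial derivatives of ∇g bounded. Let f : I × ℝ^Λ → ℝ be smooth on an open interval I, and assume that f, ∂f/∂t, and f·g are, locally uniformly in t ∈ I, bounded in absolute value by a fixed function of at most polynomial growth. Then for every t ∈ I the map t ↦ ⟨f(t,·)⟩_t is differentiable and (d/dt)⟨f(t,·)⟩_t = ⟨(∂f/∂t)(t,·)⟩_t + ( ⟨f(t,·)·g⟩_t − ⟨f(t,·)⟩_t·⟨g⟩_t ). -/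
open MeasureTheory Filter

variable {Λ : Type*} [Fintype Λ] [DecidableEq Λ]

/-- Partial derivative in direction `i`. -/
noncomputable def pd (i : Λ) (f : (Λ → ℝ) → ℝ) (x : Λ → ℝ) : ℝ :=
  fderiv ℝ f x (Pi.single i 1)

/-- Laplacian. -/
noncomputable def lap (f : (Λ → ℝ) → ℝ) (x : Λ → ℝ) : ℝ :=
  ∑ i, pd i (pd i f) x

/-- Gradient. -/
noncomputable def grad (f : (Λ → ℝ) → ℝ) (x : Λ → ℝ) : Λ → ℝ :=
  fun i => pd i f x

/-- Euclidean dot product. -/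
noncomputable def dot (u v : Λ → ℝ) : ℝ := ∑ i, u i * v i

/-- Hessian as a bilinear form. -/
noncomputable def hess (f : (Λ → ℝ) → ℝ) (x u v : Λ → ℝ) : ℝ :=
  ∑ i, ∑ j, pd i (pd j f) x * u i * v j

/-- All iterated derivatives are bounded. -/
def bddDerivs (F : (Λ → ℝ) → Λ → ℝ) : Prop :=
  ∀ n : ℕ, ∃ C : ℝ, ∀ x, ‖iteratedFDeriv ℝ n F x‖ ≤ C

/-- All iterated derivatives tend to zero at infinity. -/
def decays (v : (Λ → ℝ) → Λ → ℝ) : Prop :=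
  ∀ n : ℕ, Tendsto (fun x => ‖iteratedFDeriv ℝ n v x‖) (cocompact (Λ → ℝ)) (nhds 0)

/-- Gibbs mean of `h` w.r.t. the potential `Φ`. -/
noncomputable def gibbs (Φ h : (Λ → ℝ) → ℝ) : ℝ :=
  (∫ x, h x * Real.exp (-(Φ x))) / ∫ x, Real.exp (-(Φ x))

/-! Bounded gradients make `Ψ` and `g` Lipschitz, so for `|s| ≤ S` the Gaussian factor absorbs
their linear growth together with any polynomial weight: `(1 + ‖x‖)^m e^{-Φ_s(x)} ≤ c e^{-|x|²/4}`
uniformly in `s`. This domination lets us differentiate both `∫ f(s,·) e^{-Φ_s}` and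
`Z_s = ∫ e^{-Φ_s}` under the integral sign, with `∂_s e^{-Φ_s} = g e^{-Φ_s}`; the quotient rule
then produces the covariance term. -/

open Set
open scoped NNReal Nat Topology

theorem abs_mul_le_of_abs_le_mul {u w p q C : ℝ} (hu : |u| ≤ C * p) (hp : 0 < p) (hw : 0 ≤ w)
    (hpw : p * w ≤ q) : |u * w| ≤ C * q := by
  have hC : 0 ≤ C := nonneg_of_mul_nonneg_left ((abs_nonneg u).trans hu) hp
  calc |u * w| = |u| * w := by rw [abs_mul, abs_of_nonneg hw]
    _ ≤ C * p * w := by gcongr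
    _ ≤ C * q := by rw [mul_assoc]; gcongr

theorem one_add_pow_mul_exp_le {r : ℝ} (hr : 0 ≤ r) (A : ℝ) (m : ℕ) :
    (1 + r) ^ m * Real.exp (A * r - r ^ 2 / 4) ≤ m ! * Real.exp (1 + (A + 1) ^ 2) := by
  have hpow : (1 + r) ^ m ≤ m ! * Real.exp (1 + r) := by
    have := Real.pow_div_factorial_le_exp _ (by linarith : 0 ≤ 1 + r) m
    rwa [div_le_iff₀ (by positivity), mul_comm] at this
  calc (1 + r) ^ m * Real.exp (A * r - r ^ 2 / 4)
      ≤ m ! * Real.exp (1 + r) * Real.exp (A * r - r ^ 2 / 4) := by gcongr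
    _ = m ! * Real.exp (1 + (A + 1) * r - r ^ 2 / 4) := by
      rw [mul_assoc, ← Real.exp_add]; ring_nf
    _ ≤ m ! * Real.exp (1 + (A + 1) ^ 2) := by
      gcongr; nlinarith [sq_nonneg (r / 2 - (A + 1))]

theorem LipschitzWith.abs_le_abs_add_mul_norm {E : Type*} [SeminormedAddCommGroup E]
    {F : E → ℝ} {K : ℝ≥0} (hF : LipschitzWith K F) (x : E) : |F x| ≤ |F 0| + K * ‖x‖ := by
  have := hF.dist_le_mul x 0
  rw [Real.dist_eq, dist_zero_right] at this
  linarith [abs_sub_abs_le_abs_sub (F x) (F 0)]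

theorem ContinuousOn.continuous_of_prod_univ {T X Y : Type*} [TopologicalSpace T]
    [TopologicalSpace X] [TopologicalSpace Y] {f : T → X → Y} {I : Set T}
    (hf : ContinuousOn (fun p : T × X => f p.1 p.2) (I ×ˢ univ)) {s : T} (hs : s ∈ I) :
    Continuous (f s) :=
  continuousOn_univ.1 <|
    hf.comp (Continuous.prodMk_right s).continuousOn fun x _ => ⟨hs, mem_univ x⟩

section Partial

variable {E : Type*} [NormedAddCommGroup E] [NormedSpace ℝ E] {I : Set ℝ} {f : ℝ → E → ℝ}

theorem ContDiffOn.hasDerivAt_of_prod_univ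
    (hf : ContDiffOn ℝ 1 (fun p : ℝ × E => f p.1 p.2) (I ×ˢ univ)) (hI : IsOpen I) {s : ℝ}
    (hs : s ∈ I) (x : E) :
    HasDerivAt (fun u => f u x) (fderiv ℝ (fun p : ℝ × E => f p.1 p.2) (s, x) (1, 0)) s :=
  ((hf.differentiableOn one_ne_zero).differentiableAt
    ((hI.prod isOpen_univ).mem_nhds ⟨hs, mem_univ x⟩)).hasFDerivAt.comp_hasDerivAt s
    ((hasDerivAt_id s).prodMk (hasDerivAt_const s x))

theorem ContDiffOn.continuous_deriv_of_prod_univ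
    (hf : ContDiffOn ℝ 1 (fun p : ℝ × E => f p.1 p.2) (I ×ˢ univ)) (hI : IsOpen I) {t : ℝ}
    (ht : t ∈ I) : Continuous (fun x => deriv (fun s => f s x) t) := by
  have hfd := hf.continuousOn_fderiv_of_isOpen (hI.prod isOpen_univ) le_rfl
  simp_rw [(hf.hasDerivAt_of_prod_univ hI ht _).deriv]
  exact (ContinuousLinearMap.apply ℝ ℝ ((1 : ℝ), (0 : E))).continuous.comp
    (hfd.continuous_of_prod_univ (f := fun s x => fderiv ℝ (fun p : ℝ × E => f p.1 p.2) (s, x)) ht)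

end Partial

section Coordinates

variable {ι : Type*} [Fintype ι]

theorem integrable_exp_neg_mul_dot_self {c : ℝ} (hc : 0 < c) :
    Integrable (fun x : ι → ℝ => Real.exp (-c * dot x x)) := by
  have h : (fun x : ι → ℝ => Real.exp (-c * dot x x)) = fun x => ∏ i, Real.exp (-c * x i ^ 2) := by
    funext x
    simp only [dot, Finset.mul_sum, Real.exp_sum, sq]
  rw [h]
  exact Integrable.fintype_prod fun _ => integrable_exp_neg_mul_sq hc

theorem sq_norm_le_dot_self (x : ι → ℝ) : ‖x‖ ^ 2 ≤ dot x x := by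
  have hdot : 0 ≤ dot x x := Finset.sum_nonneg fun i _ => mul_self_nonneg (x i)
  have h : ‖x‖ ≤ √(dot x x) := by
    refine (pi_norm_le_iff_of_nonneg (Real.sqrt_nonneg _)).2 fun i => ?_
    rw [Real.le_sqrt (norm_nonneg _) hdot, Real.norm_eq_abs, sq_abs, sq]
    exact Finset.single_le_sum (f := fun j => x j * x j) (fun j _ => mul_self_nonneg (x j))
      (Finset.mem_univ i)
  exact (Real.le_sqrt (norm_nonneg _) hdot).1 h

theorem lipschitzWith_of_bddDerivs_grad [DecidableEq ι]
    {F : (ι → ℝ) → ℝ} (hF : Differentiable ℝ F) (hb : bddDerivs (grad F)) :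
    ∃ K, LipschitzWith K F := by
  obtain ⟨C, hC⟩ := hb 0
  obtain ⟨D, -, hD⟩ := (Pi.basisFun ℝ ι).exists_opNNNorm_le (F := ℝ)
  refine ⟨D * C.toNNReal, lipschitzWith_of_nnnorm_fderiv_le hF fun x => hD _ fun i => ?_⟩
  rw [← NNReal.coe_le_coe, coe_nnnorm, Real.coe_toNNReal']
  refine le_max_of_le_left ?_
  simpa [grad, pd] using (norm_le_pi_norm (grad F x) i).trans (by simpa using hC x)

end Coordinates

section GibbsDensity

variable {ι : Type*} [Fintype ι] {Ψ g : (ι → ℝ) → ℝ} {KΨ Kg : ℝ≥0}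

/-- The unnormalised density `e^{-Φ_s}` of the paper, with `Φ = |x|²/2 + Ψ`. -/
noncomputable def gibbsDensity (Ψ g : (ι → ℝ) → ℝ) (s : ℝ) (x : ι → ℝ) : ℝ :=
  Real.exp (-(dot x x / 2 + Ψ x - s * g x))

theorem gibbs_eq_div (Ψ g h : (ι → ℝ) → ℝ) (s : ℝ) :
    gibbs (fun x => dot x x / 2 + Ψ x - s * g x) h =
      (∫ x, h x * gibbsDensity Ψ g s x) / ∫ x, gibbsDensity Ψ g s x :=
  rfl

theorem continuous_gibbsDensity (hΨ : Continuous Ψ) (hg : Continuous g) (s : ℝ) :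
    Continuous (gibbsDensity Ψ g s) := by
  unfold gibbsDensity dot
  fun_prop

theorem hasDerivAt_gibbsDensity (x : ι → ℝ) (s : ℝ) :
    HasDerivAt (fun s => gibbsDensity Ψ g s x) (g x * gibbsDensity Ψ g s x) s := by
  have h := (((hasDerivAt_id s).mul_const (g x)).const_sub (dot x x / 2 + Ψ x)).neg.exp
  simpa [gibbsDensity, mul_comm] using h

theorem exists_one_add_pow_mul_gibbsDensity_le (hΨ : LipschitzWith KΨ Ψ)
    (hg : LipschitzWith Kg g) (S : ℝ) (m : ℕ) :
    ∃ c, ∀ s, |s| ≤ S → ∀ x,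
      (1 + ‖x‖) ^ m * gibbsDensity Ψ g s x ≤ c * Real.exp (-(1 / 4) * dot x x) := by
  set A := KΨ + |S| * Kg
  set B := |Ψ 0| + |S| * |g 0|
  refine ⟨m ! * Real.exp (1 + (A + 1) ^ 2) * Real.exp B, fun s hs x => ?_⟩
  have hexp : -(dot x x / 2 + Ψ x - s * g x)
      ≤ B + (A * ‖x‖ - ‖x‖ ^ 2 / 4) + -(1 / 4) * dot x x := by
    have hΨx := hΨ.abs_le_abs_add_mul_norm x
    have hgx : s * g x ≤ |S| * (|g 0| + Kg * ‖x‖) :=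
      (le_abs_self _).trans (abs_mul s (g x) ▸
        mul_le_mul (hs.trans (le_abs_self S)) (hg.abs_le_abs_add_mul_norm x) (abs_nonneg _)
          (abs_nonneg _))
    nlinarith [neg_abs_le (Ψ x), sq_norm_le_dot_self x]
  calc (1 + ‖x‖) ^ m * gibbsDensity Ψ g s x
      ≤ (1 + ‖x‖) ^ m * (Real.exp B * Real.exp (A * ‖x‖ - ‖x‖ ^ 2 / 4)
          * Real.exp (-(1 / 4) * dot x x)) := by
        rw [← Real.exp_add, ← Real.exp_add]
        exact mul_le_mul_of_nonneg_left (Real.exp_le_exp.2 hexp) (by positivity)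
    _ = Real.exp B * ((1 + ‖x‖) ^ m * Real.exp (A * ‖x‖ - ‖x‖ ^ 2 / 4))
          * Real.exp (-(1 / 4) * dot x x) := by ring
    _ ≤ Real.exp B * (m ! * Real.exp (1 + (A + 1) ^ 2)) * Real.exp (-(1 / 4) * dot x x) := by
      have := one_add_pow_mul_exp_le (norm_nonneg x) A m
      gcongr
    _ = _ := by ring

theorem integrable_mul_gibbsDensity (hΨ : LipschitzWith KΨ Ψ) (hg : LipschitzWith Kg g)
    {u : (ι → ℝ) → ℝ} (hu : Continuous u) {C : ℝ} {m : ℕ}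
    (hbound : ∀ x, |u x| ≤ C * (1 + ‖x‖) ^ m) (s : ℝ) :
    Integrable (fun x => u x * gibbsDensity Ψ g s x) := by
  obtain ⟨c, hc⟩ := exists_one_add_pow_mul_gibbsDensity_le hΨ hg |s| m
  have hmeas : AEStronglyMeasurable (fun x => u x * gibbsDensity Ψ g s x) :=
    (hu.mul (continuous_gibbsDensity hΨ.continuous hg.continuous s)).aestronglyMeasurable
  refine ((integrable_exp_neg_mul_dot_self (by norm_num : (0 : ℝ) < 1 / 4)).const_mul
    (C * c)).mono' hmeas ?_
  filter_upwards with x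
  rw [Real.norm_eq_abs, mul_assoc]
  exact abs_mul_le_of_abs_le_mul (hbound x) (by positivity) (Real.exp_pos _).le (hc s le_rfl x)

theorem integral_gibbsDensity_pos (hΨ : LipschitzWith KΨ Ψ) (hg : LipschitzWith Kg g) (s : ℝ) :
    0 < ∫ x, gibbsDensity Ψ g s x := by
  have h : Integrable (gibbsDensity Ψ g s) := by
    simpa using integrable_mul_gibbsDensity hΨ hg continuous_const (u := fun _ => 1) (C := 1)
      (m := 0) (by simp) s
  exact integral_exp_pos h

theorem hasDerivAt_integral_mul_gibbsDensity (hΨ : LipschitzWith KΨ Ψ) (hg : LipschitzWith Kg g)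
    {I : Set ℝ} (hI : IsOpen I) {f : ℝ → (ι → ℝ) → ℝ}
    (hf : ContDiffOn ℝ 1 (fun p : ℝ × (ι → ℝ) => f p.1 p.2) (I ×ˢ univ)) {t : ℝ} (ht : t ∈ I)
    (hbound : ∃ ε > (0 : ℝ), ∃ C : ℝ, ∃ m : ℕ, ∀ s ∈ I, |s - t| < ε → ∀ x,
      |f s x| ≤ C * (1 + ‖x‖) ^ m ∧ |deriv (fun s => f s x) s| ≤ C * (1 + ‖x‖) ^ m ∧
        |f s x * g x| ≤ C * (1 + ‖x‖) ^ m) :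
    HasDerivAt (fun s => ∫ x, f s x * gibbsDensity Ψ g s x)
      ((∫ x, deriv (fun s => f s x) t * gibbsDensity Ψ g t x) +
        ∫ x, f t x * g x * gibbsDensity Ψ g t x) t := by
  obtain ⟨ε, hε, C, m, hC⟩ := hbound
  have hU : I ∩ Metric.ball t ε ∈ 𝓝 t := inter_mem (hI.mem_nhds ht) (Metric.ball_mem_nhds t hε)
  have hmemU : ∀ s ∈ I ∩ Metric.ball t ε, s ∈ I ∧ |s - t| < ε ∧ |s| ≤ |t| + ε := by
    rintro s ⟨hsI, hst⟩
    rw [Metric.mem_ball, Real.dist_eq] at hst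
    exact ⟨hsI, hst, by linarith [abs_sub_abs_le_abs_sub s t]⟩
  have hCt := hC t ht (by simpa using hε)
  have hfc : ∀ s ∈ I, Continuous (f s) := fun s hs => hf.continuousOn.continuous_of_prod_univ hs
  have hdfc := hf.continuous_deriv_of_prod_univ hI ht
  have hwc := continuous_gibbsDensity hΨ.continuous hg.continuous
  obtain ⟨c, hc⟩ := exists_one_add_pow_mul_gibbsDensity_le hΨ hg (|t| + ε) m
  have hmain := hasDerivAt_integral_of_dominated_loc_of_deriv_le
    (F := fun s x => f s x * gibbsDensity Ψ g s x)
    (F' := fun s x => (deriv (fun s => f s x) s + f s x * g x) * gibbsDensity Ψ g s x)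
    (bound := fun x => 2 * C * (c * Real.exp (-(1 / 4) * dot x x)))
    hU
    (eventually_of_mem (hI.mem_nhds ht) fun s hs => ((hfc s hs).mul (hwc s)).aestronglyMeasurable)
    (integrable_mul_gibbsDensity hΨ hg (hfc t ht) (fun x => (hCt x).1) t)
    (((hdfc.add ((hfc t ht).mul hg.continuous)).mul (hwc t)).aestronglyMeasurable)
    (ae_of_all _ fun x s hs => by
      obtain ⟨hsI, hst, hsS⟩ := hmemU s hs
      obtain ⟨-, hdf, hfg⟩ := hC s hsI hst x
      exact abs_mul_le_of_abs_le_mul ((abs_add_le _ _).trans (by linarith)) (by positivity)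
        (Real.exp_pos _).le (hc s hsS x))
    (((integrable_exp_neg_mul_dot_self (by norm_num)).const_mul c).const_mul _)
    (ae_of_all _ fun x s hs =>
      (((hf.hasDerivAt_of_prod_univ hI (hmemU s hs).1 x).differentiableAt.hasDerivAt).mul
        (hasDerivAt_gibbsDensity x s)).congr_deriv (by ring))
  have hsplit := integral_add
    (integrable_mul_gibbsDensity hΨ hg hdfc (fun x => (hCt x).2.1) t)
    (integrable_mul_gibbsDensity hΨ hg ((hfc t ht).mul hg.continuous) (fun x => (hCt x).2.2) t)
  simp only [← add_mul] at hsplit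
  exact hsplit ▸ hmain.2

theorem hasDerivAt_integral_gibbsDensity (hΨ : LipschitzWith KΨ Ψ) (hg : LipschitzWith Kg g)
    (t : ℝ) :
    HasDerivAt (fun s => ∫ x, gibbsDensity Ψ g s x) (∫ x, g x * gibbsDensity Ψ g t x) t := by
  have hbound : ∃ ε > (0 : ℝ), ∃ C : ℝ, ∃ m : ℕ, ∀ s ∈ univ, |s - t| < ε → ∀ x : ι → ℝ,
      |(1 : ℝ)| ≤ C * (1 + ‖x‖) ^ m ∧ |deriv (fun _ => (1 : ℝ)) s| ≤ C * (1 + ‖x‖) ^ m ∧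
        |1 * g x| ≤ C * (1 + ‖x‖) ^ m := by
    refine ⟨1, one_pos, 1 + |g 0| + Kg, 1, fun s _ _ x => ?_⟩
    have hgx := hg.abs_le_abs_add_mul_norm x
    simp only [abs_one, deriv_const', abs_zero, one_mul, pow_one]
    refine ⟨?_, by positivity, ?_⟩ <;> nlinarith [norm_nonneg x, abs_nonneg (g 0), Kg.coe_nonneg]
  simpa using hasDerivAt_integral_mul_gibbsDensity hΨ hg isOpen_univ (f := fun _ _ => 1)
    contDiffOn_const (mem_univ t) hbound

end GibbsDensity

theorem deriv_gibbs_expectation_general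
    {Λ : Type*} [Fintype Λ] [DecidableEq Λ]
    (Ψ g Φ : (Λ → ℝ) → ℝ)
    (hΨs : ContDiff ℝ (⊤ : ℕ∞) Ψ) (hΨb : bddDerivs (grad Ψ))
    (hgs : ContDiff ℝ (⊤ : ℕ∞) g) (hgb : bddDerivs (grad g))
    (hΦdef : ∀ x, Φ x = dot x x / 2 + Ψ x)
    (a b : ℝ) (I : Set ℝ) (hI : I = Set.Ioo a b)
    (f : ℝ → (Λ → ℝ) → ℝ)
    (hf : ContDiffOn ℝ (⊤ : ℕ∞) (fun p : ℝ × (Λ → ℝ) => f p.1 p.2) (I ×ˢ Set.univ))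
    (hpoly : ∀ t₀ ∈ I, ∃ ε > (0 : ℝ), ∃ C : ℝ, ∃ m : ℕ,
      ∀ t ∈ I, |t - t₀| < ε → ∀ x,
        |f t x| ≤ C * (1 + ‖x‖) ^ m ∧
        |deriv (fun s => f s x) t| ≤ C * (1 + ‖x‖) ^ m ∧
        |f t x * g x| ≤ C * (1 + ‖x‖) ^ m) :
    ∀ t ∈ I,
      HasDerivAt (fun s => gibbs (fun x => Φ x - s * g x) (f s))
        (gibbs (fun x => Φ x - t * g x) (fun x => deriv (fun s => f s x) t) +
          (gibbs (fun x => Φ x - t * g x) (fun x => f t x * g x) -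
            gibbs (fun x => Φ x - t * g x) (f t) * gibbs (fun x => Φ x - t * g x) g))
        t := by
  intro t ht
  obtain rfl : Φ = fun x => dot x x / 2 + Ψ x := funext hΦdef
  obtain ⟨KΨ, hΨ⟩ := lipschitzWith_of_bddDerivs_grad (hΨs.differentiable (by simp)) hΨb
  obtain ⟨Kg, hg⟩ := lipschitzWith_of_bddDerivs_grad (hgs.differentiable (by simp)) hgb
  have hN := hasDerivAt_integral_mul_gibbsDensity hΨ hg (hI ▸ isOpen_Ioo) (hf.of_le (by simp))
    ht (hpoly t ht)
  have hZ := hasDerivAt_integral_gibbsDensity hΨ hg t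
  have hZ0 := (integral_gibbsDensity_pos hΨ hg t).ne'
  refine (hN.div hZ hZ0).congr_deriv ?_
  simp only [gibbs_eq_div]
  field_simp
  ring

/-- Differentiating a Gibbs expectation `⟨f(t,·)⟩_t` in the parameter `t`:
`(d/dt)⟨f(t,·)⟩_t = ⟨∂_t f(t,·)⟩_t + cov_t(f(t,·), g)`, for `f` smooth on `I × ℝ^Λ`
such that `f`, `∂_t f` and `f·g` are, locally uniformly in `t ∈ I`, dominated by a fixed
function of at most polynomial growth. -/
theorem deriv_gibbs_expectation
    {Λ : Type*} [Fintype Λ] [DecidableEq Λ] [Nonempty Λ]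
    (Ψ g Φ : (Λ → ℝ) → ℝ)
    (hΨs : ContDiff ℝ (⊤ : ℕ∞) Ψ) (hΨb : bddDerivs (grad Ψ))
    (hgs : ContDiff ℝ (⊤ : ℕ∞) g) (hgb : bddDerivs (grad g))
    (hΦdef : ∀ x, Φ x = dot x x / 2 + Ψ x)
    (a b : ℝ) (I : Set ℝ) (hI : I = Set.Ioo a b)
    (f : ℝ → (Λ → ℝ) → ℝ)
    (hf : ContDiffOn ℝ (⊤ : ℕ∞) (fun p : ℝ × (Λ → ℝ) => f p.1 p.2) (I ×ˢ Set.univ))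
    (hpoly : ∀ t₀ ∈ I, ∃ ε > (0 : ℝ), ∃ C : ℝ, ∃ m : ℕ,
      ∀ t ∈ I, |t - t₀| < ε → ∀ x,
        |f t x| ≤ C * (1 + ‖x‖) ^ m ∧
        |deriv (fun s => f s x) t| ≤ C * (1 + ‖x‖) ^ m ∧
        |f t x * g x| ≤ C * (1 + ‖x‖) ^ m) :
    ∀ t ∈ I,
      HasDerivAt (fun s => gibbs (fun x => Φ x - s * g x) (f s))
        (gibbs (fun x => Φ x - t * g x) (fun x => deriv (fun s => f s x) t) +
          (gibbs (fun x => Φ x - t * g x) (fun x => f t x * g x) -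
            gibbs (fun x => Φ x - t * g x) (f t) * gibbs (fun x => Φ x - t * g x) g))
        t :=
  deriv_gibbs_expectation_general Ψ g Φ hΨs hΨb hgs hgb hΦdef a b I hI f hf hpoly
end

section
/- Let N ≥ 1, let φ : ℝ^N → ℝ be smooth with Hess φ(x) ≥ δ·Id for all x (δ > 0), and let V : ℝ^N → ℝ^N be a smooth compactly supported vector field. Set q = −ΔV + (|∇φ|²/4 − Δφ/2)V + (Hess φ)V, where −Δ acts componentwise and Hess φ acts as a matrix. Then ∫ q(x)·V(x) dx ≥ δ ∫ |V(x)|² dx, and consequently the L² bound ‖V‖_{L²} ≤ δ^{−1} ‖q‖_{L²} holds. -/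
/-!
Write `Lⱼ = ∂ⱼ + (∂ⱼφ)/2`. For a scalar `u` with compact support, integrating by parts turns
`-u ∂ⱼ²u` into `(∂ⱼu)²` and `u ∂ⱼu ∂ⱼφ` into `-(∂ⱼ²φ) u²/2`, so that
`∫ (-Δu + (|∇φ|²/4 - Δφ/2) u) u = ∑ⱼ ∫ (Lⱼu)² ≥ 0`: the Witten Laplacian on functions is
nonnegative. Applied to each component of `V`, this leaves `∫ q·V ≥ ∫ Hess φ (V, V) ≥ δ ∫ |V|²`.
The `L²` bound follows by integrating `2δ q·V ≤ |q|² + δ²|V|²`.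
-/

open MeasureTheory Filter

variable {Λ : Type*} [Fintype Λ] [DecidableEq Λ]

theorem hasCompactSupport_pi_iff {X ι : Type*} [TopologicalSpace X] [Finite ι]
    {f : X → ι → ℝ} : HasCompactSupport f ↔ ∀ i, HasCompactSupport fun x => f x i := by
  simp only [hasCompactSupport_iff_eventuallyEq]
  refine ⟨fun h i => h.mono fun x hx => congrFun hx i, fun h => ?_⟩
  exact (eventually_all.2 h).mono fun x hx => funext hx

theorem integrable_dot {X ι : Type*} [MeasurableSpace X] [TopologicalSpace X]
    [OpensMeasurableSpace X] {μ : Measure X} [IsFiniteMeasureOnCompacts μ] [Fintype ι]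
    {f g : X → ι → ℝ} (hf : Continuous f) (hg : Continuous g) (hgc : HasCompactSupport g) :
    Integrable (fun x => dot (f x) (g x)) μ := by
  refine Continuous.integrable_of_hasCompactSupport ?_ (hgc.mono fun x hx h0 => hx ?_)
  · exact continuous_finsetSum _ fun i _ =>
      ((continuous_apply i).comp hf).mul ((continuous_apply i).comp hg)
  · simp [dot, h0]

theorem hasCompactSupport_pd {ι : Type*} [DecidableEq ι] {f : (ι → ℝ) → ℝ}
    (hf : HasCompactSupport f) (i : ι) : HasCompactSupport (pd i f) :=
  hf.fderiv_apply ℝ (Pi.single i 1)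

section PartialDerivatives

variable {f g : (Λ → ℝ) → ℝ}

theorem contDiff_pd {m n : WithTop ℕ∞} (hf : ContDiff ℝ n f) (hmn : m + 1 ≤ n) (i : Λ) :
    ContDiff ℝ m (pd i f) :=
  (ContinuousLinearMap.apply ℝ ℝ (Pi.single i 1 : Λ → ℝ)).contDiff.comp (hf.fderiv_right hmn)

theorem continuous_pd (hf : ContDiff ℝ 1 f) (i : Λ) : Continuous (pd i f) :=
  (contDiff_pd (m := 0) hf (by simp) i).continuous

theorem continuous_pd_pd (hf : ContDiff ℝ 2 f) (i j : Λ) :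
    Continuous (pd i (pd j f)) :=
  continuous_pd (contDiff_pd hf (by norm_num) j) i

theorem pd_mul {x : Λ → ℝ} (hf : DifferentiableAt ℝ f x) (hg : DifferentiableAt ℝ g x) (i : Λ) :
    pd i (fun y => f y * g y) x = pd i f x * g x + f x * pd i g x := by
  simp only [pd, fderiv_fun_mul hf hg, add_apply, smul_apply, smul_eq_mul]
  ring

theorem hasCompactSupport_lap (hf : HasCompactSupport f) : HasCompactSupport (lap f) := by
  have : lap f = ∑ i, pd i (pd i f) := by ext x; simp [lap]
  rw [this]
  exact HasCompactSupport.finset_sum fun i _ => hasCompactSupport_pd (hasCompactSupport_pd hf i) i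

theorem continuous_lap (hf : ContDiff ℝ 2 f) : Continuous (lap f) :=
  continuous_finsetSum _ fun i _ => continuous_pd_pd hf i i

variable {μ : Measure (Λ → ℝ)} [μ.IsAddHaarMeasure]

theorem integrable_pd (hf : ContDiff ℝ 1 f) (hfc : HasCompactSupport f) (i : Λ) :
    Integrable (pd i f) μ :=
  (continuous_pd hf i).integrable_of_hasCompactSupport (hasCompactSupport_pd hfc i)

theorem integral_pd_eq_zero (hf : ContDiff ℝ 1 f) (hfc : HasCompactSupport f) (i : Λ) :
    ∫ x, pd i f x ∂μ = 0 := by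
  have hpd : Integrable (fun x => fderiv ℝ f x (Pi.single i 1)) μ := integrable_pd hf hfc i
  have h := integral_mul_fderiv_eq_neg_fderiv_mul_of_integrable (μ := μ)
    (f := fun _ => (1 : ℝ)) (g := f) (v := Pi.single i 1) (by simp)
    (by simpa using hpd)
    (by simpa using hf.continuous.integrable_of_hasCompactSupport hfc)
    (fun x _ => differentiableAt_const 1) (fun x _ => hf.differentiable one_ne_zero x)
  simpa [pd] using h

end PartialDerivatives

/-- The Witten Laplacian `W_φ^{(0)}` on functions; `wittenLap₁` is `W_φ^{(1)}` on vector fields. -/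
noncomputable def wittenLap₀ (φ u : (Λ → ℝ) → ℝ) (x : Λ → ℝ) : ℝ :=
  -lap u x + (dot (grad φ x) (grad φ x) / 4 - lap φ x / 2) * u x

noncomputable def wittenLap₁ (φ : (Λ → ℝ) → ℝ) (V : (Λ → ℝ) → Λ → ℝ) (x : Λ → ℝ) : Λ → ℝ :=
  fun i => wittenLap₀ φ (fun y => V y i) x + ∑ j, pd i (pd j φ) x * V x j

section WittenLaplacian

variable {φ u : (Λ → ℝ) → ℝ} {V : (Λ → ℝ) → Λ → ℝ}

theorem continuous_wittenLap₀ (hφ : ContDiff ℝ 2 φ) (hu : ContDiff ℝ 2 u) :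
    Continuous (wittenLap₀ φ u) := by
  have hgrad : ∀ j, Continuous (pd j φ) := continuous_pd (hφ.of_le (by norm_num))
  have hlapφ := continuous_lap hφ
  have hlapu := continuous_lap hu
  unfold wittenLap₀ dot grad
  fun_prop

theorem hasCompactSupport_wittenLap₀ (hu : HasCompactSupport u) :
    HasCompactSupport (wittenLap₀ φ u) :=
  (hasCompactSupport_lap hu).neg.add hu.mul_left

theorem wittenLap₀_mul_self (hφ : ContDiff ℝ 2 φ) (hu : ContDiff ℝ 2 u) (x : Λ → ℝ) :
    wittenLap₀ φ u x * u x = ∑ j, ((pd j u x + pd j φ x / 2 * u x) ^ 2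
      - pd j (fun y => u y * pd j u y) x - pd j (fun y => pd j φ y * (u y * u y)) x / 2) := by
  have hu' : DifferentiableAt ℝ u x := hu.differentiable (by norm_num) x
  have hdu : ∀ j, DifferentiableAt ℝ (pd j u) x := fun j =>
    (contDiff_pd hu (m := 1) (by norm_num) j).differentiable one_ne_zero x
  have hdφ : ∀ j, DifferentiableAt ℝ (pd j φ) x := fun j =>
    (contDiff_pd hφ (m := 1) (by norm_num) j).differentiable one_ne_zero x
  calc wittenLap₀ φ u x * u x = ∑ j, (-(pd j (pd j u) x * u x)
        + pd j φ x * pd j φ x * (u x * u x) / 4 - pd j (pd j φ) x * (u x * u x) / 2) := by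
        simp only [wittenLap₀, lap, dot, grad, Finset.sum_add_distrib, Finset.sum_sub_distrib,
          Finset.sum_neg_distrib, ← Finset.sum_mul, ← Finset.sum_div]
        ring
    _ = _ := Finset.sum_congr rfl fun j _ => by
        rw [pd_mul (hdφ j) (hu'.fun_mul hu'), pd_mul hu' hu', pd_mul hu' (hdu j)]
        ring

variable {μ : Measure (Λ → ℝ)} [μ.IsAddHaarMeasure]

theorem integral_wittenLap₀_mul_self (hφ : ContDiff ℝ 2 φ) (hu : ContDiff ℝ 2 u)
    (huc : HasCompactSupport u) :
    ∫ x, wittenLap₀ φ u x * u x ∂μ = ∑ j, ∫ x, (pd j u x + pd j φ x / 2 * u x) ^ 2 ∂μ := by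
  have hu1 : ContDiff ℝ 1 u := hu.of_le (by norm_num)
  have hdu : ∀ j, ContDiff ℝ 1 (pd j u) := fun j => contDiff_pd hu (by norm_num) j
  have hdφ : ∀ j, ContDiff ℝ 1 (pd j φ) := fun j => contDiff_pd hφ (by norm_num) j
  have hsq : ∀ j, Integrable (fun x => (pd j u x + pd j φ x / 2 * u x) ^ 2) μ := by
    intro j
    have hL : HasCompactSupport (fun x => pd j u x + pd j φ x / 2 * u x) :=
      (hasCompactSupport_pd huc j).add (huc.mul_left (f := fun x => pd j φ x / 2))
    have hcont : Continuous (fun x => (pd j u x + pd j φ x / 2 * u x) ^ 2) := by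
      have := (hdu j).continuous
      have := (hdφ j).continuous
      fun_prop
    exact hcont.integrable_of_hasCompactSupport (hL.comp_left (g := fun t => t ^ 2) (by simp))
  have hA : ∀ j, ContDiff ℝ 1 (fun y => u y * pd j u y) := fun j => hu1.mul (hdu j)
  have hAc : ∀ j, HasCompactSupport (fun y => u y * pd j u y) := fun j => huc.mul_right
  have hB : ∀ j, ContDiff ℝ 1 (fun y => pd j φ y * (u y * u y)) := fun j =>
    (hdφ j).mul (hu1.mul hu1)
  have hBc : ∀ j, HasCompactSupport (fun y => pd j φ y * (u y * u y)) := fun j =>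
    huc.mul_left.mul_left
  have hsqA : ∀ j, Integrable (fun x => (pd j u x + pd j φ x / 2 * u x) ^ 2
      - pd j (fun y => u y * pd j u y) x) μ := fun j =>
    (hsq j).sub (integrable_pd (hA j) (hAc j) j)
  have hsqAB : ∀ j, Integrable (fun x => (pd j u x + pd j φ x / 2 * u x) ^ 2
      - pd j (fun y => u y * pd j u y) x - pd j (fun y => pd j φ y * (u y * u y)) x / 2) μ :=
    fun j => (hsqA j).sub ((integrable_pd (hB j) (hBc j) j).div_const 2)
  simp_rw [wittenLap₀_mul_self hφ hu]
  rw [integral_finsetSum _ fun j _ => hsqAB j]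
  refine Finset.sum_congr rfl fun j _ => ?_
  rw [integral_sub (hsqA j) ((integrable_pd (hB j) (hBc j) j).div_const 2),
    integral_sub (hsq j) (integrable_pd (hA j) (hAc j) j), integral_div,
    integral_pd_eq_zero (hA j) (hAc j), integral_pd_eq_zero (hB j) (hBc j)]
  ring

theorem integral_wittenLap₀_mul_self_nonneg (hφ : ContDiff ℝ 2 φ) (hu : ContDiff ℝ 2 u)
    (huc : HasCompactSupport u) : 0 ≤ ∫ x, wittenLap₀ φ u x * u x ∂μ := by
  rw [integral_wittenLap₀_mul_self hφ hu huc]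
  exact Finset.sum_nonneg fun j _ => integral_nonneg fun x => sq_nonneg _

theorem continuous_wittenLap₁ (hφ : ContDiff ℝ 2 φ) (hV : ContDiff ℝ 2 V) :
    Continuous (wittenLap₁ φ V) :=
  continuous_pi fun i => (continuous_wittenLap₀ hφ (contDiff_pi.1 hV i)).add <|
    continuous_finsetSum _ fun j _ =>
      (continuous_pd_pd hφ i j).mul ((continuous_apply j).comp hV.continuous)

theorem hasCompactSupport_wittenLap₁ (hVc : HasCompactSupport V) :
    HasCompactSupport (wittenLap₁ φ V) := by
  rw [hasCompactSupport_pi_iff] at hVc ⊢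
  intro i
  refine (hasCompactSupport_wittenLap₀ (hVc i)).add ?_
  simpa only [Finset.sum_fn, Pi.mul_apply] using
    HasCompactSupport.finset_sum fun j _ => (hVc j).mul_left

theorem dot_wittenLap₁_self (x : Λ → ℝ) :
    dot (wittenLap₁ φ V x) (V x) =
      ∑ i, wittenLap₀ φ (fun y => V y i) x * V x i + hess φ x (V x) (V x) := by
  simp only [dot, wittenLap₁, hess, add_mul, Finset.sum_add_distrib, Finset.sum_mul]
  congr 1
  exact Finset.sum_congr rfl fun i _ => Finset.sum_congr rfl fun j _ => by ring

theorem mul_integral_dot_self_le_integral_dot_wittenLap₁ {δ : ℝ} (hφ : ContDiff ℝ 2 φ)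
    (hV : ContDiff ℝ 2 V) (hVc : HasCompactSupport V) (hconv : ∀ x ξ, δ * dot ξ ξ ≤ hess φ x ξ ξ) :
    δ * ∫ x, dot (V x) (V x) ∂μ ≤ ∫ x, dot (wittenLap₁ φ V x) (V x) ∂μ := by
  have hVi : ∀ i, ContDiff ℝ 2 fun x => V x i := contDiff_pi.1 hV
  have hVic : ∀ i, HasCompactSupport fun x => V x i := hasCompactSupport_pi_iff.1 hVc
  have hW₀ : ∀ i, Integrable (fun x => wittenLap₀ φ (fun y => V y i) x * V x i) μ := fun i =>
    ((continuous_wittenLap₀ hφ (hVi i)).mul (hVi i).continuous).integrable_of_hasCompactSupport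
      (hVic i).mul_left
  have hhess : Integrable (fun x => hess φ x (V x) (V x)) μ := by
    refine Continuous.integrable_of_hasCompactSupport ?_ (hVc.mono fun x hx h0 => hx ?_)
    · exact continuous_finsetSum _ fun i _ => continuous_finsetSum _ fun j _ =>
        ((continuous_pd_pd hφ i j).mul (hVi i).continuous).mul (hVi j).continuous
    · simp [hess, h0]
  calc δ * ∫ x, dot (V x) (V x) ∂μ = ∫ x, δ * dot (V x) (V x) ∂μ := (integral_const_mul _ _).symm
    _ ≤ ∫ x, hess φ x (V x) (V x) ∂μ :=
        integral_mono ((integrable_dot hV.continuous hV.continuous hVc).const_mul δ) hhess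
          fun x => hconv x (V x)
    _ ≤ ∑ i, ∫ x, wittenLap₀ φ (fun y => V y i) x * V x i ∂μ + ∫ x, hess φ x (V x) (V x) ∂μ :=
        le_add_of_nonneg_left <| Finset.sum_nonneg fun i _ =>
          integral_wittenLap₀_mul_self_nonneg hφ (hVi i) (hVic i)
    _ = ∫ x, dot (wittenLap₁ φ V x) (V x) ∂μ := by
        simp_rw [dot_wittenLap₁_self]
        rw [integral_add (integrable_finsetSum _ fun i _ => hW₀ i) hhess,
          integral_finsetSum _ fun i _ => hW₀ i]

end WittenLaplacian

theorem two_mul_mul_dot_le {ι : Type*} [Fintype ι] (u v : ι → ℝ) (δ : ℝ) :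
    2 * δ * dot u v ≤ dot u u + δ ^ 2 * dot v v := by
  simp only [dot, Finset.mul_sum, ← Finset.sum_add_distrib]
  exact Finset.sum_le_sum fun i _ => by nlinarith [sq_nonneg (u i - δ * v i)]

theorem sqrt_integral_dot_self_le {α ι : Type*} [MeasurableSpace α] [Fintype ι]
    {μ : Measure α} {f g : α → ι → ℝ} {δ : ℝ} (hδ : 0 < δ)
    (hff : Integrable (fun x => dot (f x) (f x)) μ)
    (hfg : Integrable (fun x => dot (f x) (g x)) μ)
    (hgg : Integrable (fun x => dot (g x) (g x)) μ)
    (h : δ * ∫ x, dot (g x) (g x) ∂μ ≤ ∫ x, dot (f x) (g x) ∂μ) :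
    √(∫ x, dot (g x) (g x) ∂μ) ≤ δ⁻¹ * √(∫ x, dot (f x) (f x) ∂μ) := by
  have hmono := integral_mono (μ := μ) (f := fun x => 2 * δ * dot (f x) (g x))
    (g := fun x => dot (f x) (f x) + δ ^ 2 * dot (g x) (g x))
    (hfg.const_mul _) (hff.add (hgg.const_mul _)) fun x => two_mul_mul_dot_le (f x) (g x) δ
  rw [integral_const_mul, integral_add hff (hgg.const_mul _), integral_const_mul] at hmono
  have hsq : δ ^ 2 * ∫ x, dot (g x) (g x) ∂μ ≤ ∫ x, dot (f x) (f x) ∂μ := by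
    nlinarith [mul_le_mul_of_nonneg_left h hδ.le]
  rw [le_inv_mul_iff₀ hδ]
  calc δ * √(∫ x, dot (g x) (g x) ∂μ) = √(δ ^ 2 * ∫ x, dot (g x) (g x) ∂μ) := by
        rw [Real.sqrt_mul (sq_nonneg δ), Real.sqrt_sq hδ.le]
    _ ≤ √(∫ x, dot (f x) (f x) ∂μ) := Real.sqrt_le_sqrt hsq

theorem witten_laplacian_one_forms_lower_bound_general
    (N : ℕ)
    (φ : (Fin N → ℝ) → ℝ) (δ : ℝ) (hδ : 0 < δ)
    (hφ : ContDiff ℝ (⊤ : ℕ∞) φ)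
    (hconv : ∀ x ξ, δ * dot ξ ξ ≤ hess φ x ξ ξ)
    (V : (Fin N → ℝ) → Fin N → ℝ)
    (hV : ContDiff ℝ (⊤ : ℕ∞) V) (hVc : HasCompactSupport V)
    (q : (Fin N → ℝ) → Fin N → ℝ)
    (hq : ∀ x i, q x i =
      -lap (fun y => V y i) x +
        (dot (grad φ x) (grad φ x) / 4 - lap φ x / 2) * V x i +
        ∑ j, pd i (pd j φ) x * V x j) :
    δ * ∫ x, dot (V x) (V x) ≤ (∫ x, dot (q x) (V x)) ∧
    Real.sqrt (∫ x, dot (V x) (V x)) ≤ δ⁻¹ * Real.sqrt (∫ x, dot (q x) (q x)) := by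
  obtain rfl : q = wittenLap₁ φ V := funext fun x => funext (hq x)
  have hφ₂ : ContDiff ℝ 2 φ := hφ.of_le (WithTop.coe_le_coe.2 le_top)
  have hV₂ : ContDiff ℝ 2 V := hV.of_le (WithTop.coe_le_coe.2 le_top)
  have hW := continuous_wittenLap₁ hφ₂ hV₂
  have hWc : HasCompactSupport (wittenLap₁ φ V) := hasCompactSupport_wittenLap₁ hVc
  have hcoercive := mul_integral_dot_self_le_integral_dot_wittenLap₁ (μ := volume) hφ₂ hV₂ hVc hconv
  exact ⟨hcoercive, sqrt_integral_dot_self_le hδ (integrable_dot hW hW hWc)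
    (integrable_dot hW hV.continuous hVc) (integrable_dot hV.continuous hV.continuous hVc)
    hcoercive⟩

/-- For `φ` with `Hess φ ≥ δ·Id` and `V` a smooth compactly supported vector
field, setting `q = -ΔV + (|∇φ|²/4 - Δφ/2)V + (Hess φ)V` one has
`∫ q·V dx ≥ δ ∫ |V|² dx`, hence the L² bound `‖V‖ ≤ δ⁻¹ ‖q‖`. -/
theorem witten_laplacian_one_forms_lower_bound
    (N : ℕ) (hN : 1 ≤ N)
    (φ : (Fin N → ℝ) → ℝ) (δ : ℝ) (hδ : 0 < δ)
    (hφ : ContDiff ℝ (⊤ : ℕ∞) φ)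
    (hconv : ∀ x ξ, δ * dot ξ ξ ≤ hess φ x ξ ξ)
    (V : (Fin N → ℝ) → Fin N → ℝ)
    (hV : ContDiff ℝ (⊤ : ℕ∞) V) (hVc : HasCompactSupport V)
    (q : (Fin N → ℝ) → Fin N → ℝ)
    (hq : ∀ x i, q x i =
      -lap (fun y => V y i) x +
        (dot (grad φ x) (grad φ x) / 4 - lap φ x / 2) * V x i +
        ∑ j, pd i (pd j φ) x * V x j) :
    δ * ∫ x, dot (V x) (V x) ≤ (∫ x, dot (q x) (V x)) ∧
    Real.sqrt (∫ x, dot (V x) (V x)) ≤ δ⁻¹ * Real.sqrt (∫ x, dot (q x) (q x)) :=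
  witten_laplacian_one_forms_lower_bound_general N φ δ hδ hφ hconv V hV hVc q hq
end
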